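/- For every k ≥ 2 and every d ≥ 2, the seed #^{d-r} - #^r with r = [d/3] (the nearest integer to d/3) has the minimal k-critical length among all seeds of the form #^{d-r'} - #^{r'} of weight d with exactly one joker. -/

import Mathlib

/-!
Read a binary word through its zeros. A zero at `z` blocks the window of `#^p - #^q` starting
at `i` exactly when `i ≤ z ≤ i + (p + q)` and `z ≠ i + p`, so the critical length is `p + q + 1`
plus the longest run of consecutive windows that `k` zeros can block.

For `q ≤ p ≤ 2q + 1` that run has length at most `g k`, where `g 0 = 0`, `g 1 = p` and
`g (J + 2) = g J + (p + 2q + 1)`: look at the least zero `z`. If its hole `z - p` lies below the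
run, `z` blocks at most `p` windows of it; otherwise the hole has to be blocked by a second zero
in `(z, z + q]`, and the pair blocks at most `p + 2q + 1` windows.

Conversely, let `d = p + q` and `#^{p'} - #^{q'}` be any competitor with `p' + q' = d`. For
`k ≥ 2`, some `k` zeros block `g k` consecutive windows of it: if `q ≤ p'` and `q ≤ q'`, take
pairs `{s + d, s + d + q}`, each blocking `p + 2q + 1` windows, and for odd `k` one triple
blocking `2d + 1`; otherwise `p'` or `q'` exceeds `p`, so each zero blocks a block of `p + 1`
windows, and `g k ≤ k (p + 1)` when `2q ≤ p + 1`. For `q = [d/3]` all of `q ≤ p ≤ 2q + 1` and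
`2q ≤ p + 1` hold.
-/

/-- Number of zeros of word `w` among positions `0 .. m-1`. -/
def zerosIn (m : ℕ) (w : ℕ → Bool) : ℕ :=
  ((Finset.range m).filter (fun j => w j = false)).card

/-- Seed `Q` matches word `w` of length `m` at position `i`. -/
def MatchesAt (Q : Finset ℕ) (m : ℕ) (w : ℕ → Bool) (i : ℕ) : Prop :=
  ∀ p ∈ Q, i + p < m ∧ w (i + p) = true

/-- Seed `Q` detects word `w` of length `m`. -/
def Detects (Q : Finset ℕ) (m : ℕ) (w : ℕ → Bool) : Prop :=
  ∃ i, MatchesAt Q m w i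

/-- Seed `Q` solves the linear `(m,k)`-problem. -/
def Solves (Q : Finset ℕ) (m k : ℕ) : Prop :=
  ∀ w : ℕ → Bool, zerosIn m w ≤ k → Detects Q m w

/-- A family of seeds solves the linear `(m,k)`-problem. -/
def FSolves (F : Set (Finset ℕ)) (m k : ℕ) : Prop :=
  ∀ w : ℕ → Bool, zerosIn m w ≤ k → ∃ Q ∈ F, Detects Q m w

/-- Seed `Q` solves the cyclic `(m,k)`-problem. -/
def CSolves (Q : Finset ℕ) (m k : ℕ) : Prop :=
  ∀ w : ℕ → Bool, zerosIn m w ≤ k →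
    ∃ j < m, ∀ p ∈ Q, w ((j + p) % m) = true

/-- The seed `#^p - #^q` : matching positions `0..p-1` and `p+1..p+q`. -/
def Qpq (p q : ℕ) : Finset ℕ := Finset.range p ∪ Finset.Icc (p+1) (p+q)

/-- The `k`-critical length of a seed: least `m` such that it solves the `(m,k)`-problem. -/
noncomputable def critLen (Q : Finset ℕ) (k : ℕ) : ℕ := sInf {m | Solves Q m k}

lemma mem_Qpq {p q x : ℕ} : x ∈ Qpq p q ↔ x < p ∨ p + 1 ≤ x ∧ x ≤ p + q := by
  simp [Qpq]

/-- A zero at position `z` prevents `Qpq p q` from matching at position `i`. -/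
def Blocks (p q z i : ℕ) : Prop := i ≤ z ∧ z ≤ i + (p + q) ∧ z ≠ i + p

def BlocksIco (p q : ℕ) (Z : Finset ℕ) (s e : ℕ) : Prop :=
  ∀ i, s ≤ i → i < e → ∃ z ∈ Z, Blocks p q z i

/-- The largest number of consecutive positions at which `J` zeros can block `Qpq p q`,
when `q ≤ p ≤ 2q + 1`. -/
def maxBlockedRun (p q : ℕ) : ℕ → ℕ
  | 0 => 0
  | 1 => p
  | J + 2 => maxBlockedRun p q J + (p + 2 * q + 1)

section maxBlockedRun

variable {p q : ℕ}

lemma maxBlockedRun_add_le_succ (hp : p ≤ 2 * q + 1) (J : ℕ) :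
    maxBlockedRun p q J + p ≤ maxBlockedRun p q (J + 1) := by
  induction J using Nat.twoStepInduction with
  | zero => simp [maxBlockedRun]
  | one => simp [maxBlockedRun]; omega
  | more J ih _ => simp only [maxBlockedRun] at ih ⊢; omega

lemma maxBlockedRun_mono (hp : p ≤ 2 * q + 1) : Monotone (maxBlockedRun p q) :=
  monotone_nat_of_le_succ fun J => (Nat.le_add_right _ p).trans (maxBlockedRun_add_le_succ hp J)

lemma maxBlockedRun_le_mul (hq : 2 * q ≤ p + 1) (J : ℕ) :
    maxBlockedRun p q J ≤ J * (p + 1) := by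
  induction J using Nat.twoStepInduction with
  | zero => simp [maxBlockedRun]
  | one => simp [maxBlockedRun]
  | more J ih _ =>
    simp only [maxBlockedRun]
    rw [add_mul]
    omega

end maxBlockedRun

namespace BlocksIco

variable {p q : ℕ} {Z Z' : Finset ℕ} {s e : ℕ}

lemma mono {s' e' : ℕ} (h : BlocksIco p q Z s e) (hs : s ≤ s') (he : e' ≤ e) :
    BlocksIco p q Z s' e' :=
  fun i hi hie => h i (hs.trans hi) (lt_of_lt_of_le hie he)

lemma union {f : ℕ} (h : BlocksIco p q Z s e) (h' : BlocksIco p q Z' e f) :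
    BlocksIco p q (Z ∪ Z') s f := by
  intro i hsi hif
  by_cases hie : i < e
  · obtain ⟨z, hz, hb⟩ := h i hsi hie
    exact ⟨z, Finset.mem_union_left _ hz, hb⟩
  · obtain ⟨z, hz, hb⟩ := h' i (not_lt.1 hie) hif
    exact ⟨z, Finset.mem_union_right _ hz, hb⟩

lemma erase_of_lt {z : ℕ} (h : BlocksIco p q Z s e) (hz : z < s) :
    BlocksIco p q (Z.erase z) s e := by
  intro i hsi hie
  obtain ⟨y, hy, hb⟩ := h i hsi hie
  exact ⟨y, Finset.mem_erase.2 ⟨by unfold Blocks at hb; omega, hy⟩, hb⟩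

lemma le_add_card_mul (h : BlocksIco p q Z s e) : e ≤ s + Z.card * (p + q + 1) := by
  have hsub : Finset.Ico s e ⊆ Z.biUnion fun z => Finset.Icc (z - (p + q)) z := by
    intro i hi
    obtain ⟨z, hz, hb⟩ := h i (Finset.mem_Ico.1 hi).1 (Finset.mem_Ico.1 hi).2
    unfold Blocks at hb
    exact Finset.mem_biUnion.2 ⟨z, hz, Finset.mem_Icc.2 ⟨by omega, hb.1⟩⟩
  have hcard := (Finset.card_le_card hsub).trans
    (Finset.card_biUnion_le_card_mul Z _ (p + q + 1) fun z _ => by simp; omega)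
  simp only [Nat.card_Ico] at hcard
  omega

lemma le_add_maxBlockedRun (hqp : q ≤ p) (hp : p ≤ 2 * q + 1) (h : BlocksIco p q Z s e) :
    e ≤ s + maxBlockedRun p q Z.card := by
  induction hJ : Z.card using Nat.strong_induction_on generalizing Z s with
  | _ J ih =>
  by_cases hes : e ≤ s
  · omega
  obtain ⟨z₀, hz₀, hz₀s⟩ := h s le_rfl (by omega)
  have hne : Z.Nonempty := ⟨z₀, hz₀⟩
  set z := Z.min' hne
  have hz : z ∈ Z := Z.min'_mem hne
  have hzs : z ≤ s + (p + q) := (Z.min'_le z₀ hz₀).trans hz₀s.2.1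
  obtain ⟨J, rfl⟩ : ∃ J', J = J' + 1 := ⟨J - 1, by have := Finset.card_pos.2 hne; omega⟩
  have hstep := maxBlockedRun_add_le_succ hp J
  have hcard : (Z.erase z).card = J := by rw [Finset.card_erase_of_mem hz, hJ]; rfl
  rcases lt_or_ge z (s + p) with hlow | hhigh
  · -- the hole `z - p` lies below `s`, so `z` blocks at most the `p` positions `[s, z]`
    have hrest := (h.mono (le_max_left s (z + 1)) le_rfl).erase_of_lt
      (lt_of_lt_of_le (Nat.lt_succ_self z) (le_max_right s (z + 1)))
    have := ih J (by omega) hrest hcard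
    omega
  rcases lt_or_ge (z - p) e with hhole | hhole
  · -- the hole is blocked by some `y ∈ (z, z + q]`, and neither `z` nor `y` blocks beyond `z + q`
    obtain ⟨y, hy, hyb⟩ := h (z - p) (by omega) hhole
    unfold Blocks at hyb
    have hzy : z < y := lt_of_le_of_ne (Z.min'_le y hy) (by omega)
    have hy' : y ∈ Z.erase z := Finset.mem_erase.2 ⟨by omega, hy⟩
    obtain ⟨J, rfl⟩ : ∃ J', J = J' + 1 := ⟨J - 1, by
      have := Finset.card_pos.2 ⟨y, hy'⟩; omega⟩
    have hrest := ((h.mono (s' := z + q + 1) (by omega) le_rfl).erase_of_lt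
      (z := z) (by omega)).erase_of_lt (z := y) (by omega)
    have := ih J (by omega) hrest (by rw [Finset.card_erase_of_mem hy', hcard]; rfl)
    simp only [maxBlockedRun]
    omega
  · -- the run ends before the hole, so it is at most `q ≤ p` long
    omega

end BlocksIco

section Constructions

variable {p q : ℕ} {s : ℕ}

lemma blocksIco_singleton_right : BlocksIco p q {s + p - 1} s (s + p) :=
  fun i hsi hie => ⟨_, Finset.mem_singleton_self _, by unfold Blocks; omega⟩

lemma blocksIco_singleton_left : BlocksIco p q {s + (p + q)} s (s + q) :=
  fun i hsi hie => ⟨_, Finset.mem_singleton_self _, by unfold Blocks; omega⟩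

lemma blocksIco_pair {c : ℕ} (hc : 1 ≤ c) (hcp : c ≤ p) (hcq : c ≤ q) :
    BlocksIco p q {s + (p + q), s + (p + q) + c} s (s + (p + q) + c + 1) := by
  intro i hsi hie
  by_cases h : i ≤ s + (p + q) ∧ i ≠ s + q
  · exact ⟨s + (p + q), by simp, by unfold Blocks; omega⟩
  · exact ⟨s + (p + q) + c, by simp, by unfold Blocks; omega⟩

lemma blocksIco_triple (hp : 1 ≤ p) (hq : 1 ≤ q) :
    BlocksIco p q {s + (p + q), s + (p + q) + q, s + 2 * (p + q)} s (s + 2 * (p + q) + 1) := by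
  intro i hsi hie
  by_cases h₁ : i ≤ s + (p + q) ∧ i ≠ s + q
  · exact ⟨s + (p + q), by simp, by unfold Blocks; omega⟩
  by_cases h₂ : s + (p + q) ≤ i ∧ i ≠ s + (p + q) + q
  · exact ⟨s + 2 * (p + q), by simp, by unfold Blocks; omega⟩
  · exact ⟨s + (p + q) + q, by simp, by unfold Blocks; omega⟩

lemma exists_blocksIco_mul {ℓ : ℕ} (h : ∀ s, ∃ z, BlocksIco p q {z} s (s + ℓ)) (k : ℕ) :
    ∃ Z : Finset ℕ, Z.card ≤ k ∧ BlocksIco p q Z 0 (k * ℓ) := by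
  induction k with
  | zero => exact ⟨∅, by simp, fun i _ hi => by simp at hi⟩
  | succ k ih =>
    obtain ⟨Z, hZ, hb⟩ := ih
    obtain ⟨z, hz⟩ := h (k * ℓ)
    refine ⟨Z ∪ {z}, (Finset.card_union_le _ _).trans (by simpa using hZ), ?_⟩
    rw [Nat.succ_mul]
    exact hb.union hz

variable {p' q' : ℕ}

lemma exists_blocksIco_maxBlockedRun_add_two (hq : 1 ≤ q) (hqp' : q ≤ p') (hqq' : q ≤ q')
    (hsum : p' + q' = p + q) (t : ℕ) :
    ∃ Z : Finset ℕ, Z.card ≤ t + 2 ∧ BlocksIco p' q' Z 0 (maxBlockedRun p q (t + 2)) := by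
  induction t using Nat.twoStepInduction with
  | zero =>
    refine ⟨_, Finset.card_le_two, (blocksIco_pair (s := 0) hq hqp' hqq').mono le_rfl ?_⟩
    simp only [maxBlockedRun]
    omega
  | one =>
    refine ⟨_, Finset.card_le_three, (blocksIco_triple (s := 0) (by omega) (by omega)).mono
      le_rfl ?_⟩
    simp only [maxBlockedRun]
    omega
  | more t ih _ =>
    obtain ⟨Z, hZ, hb⟩ := ih
    have hpair := blocksIco_pair (s := maxBlockedRun p q (t + 2)) hq hqp' hqq'
    refine ⟨_, (Finset.card_union_le _ _).trans (add_le_add hZ Finset.card_le_two),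
      (hb.union hpair).mono le_rfl ?_⟩
    simp only [maxBlockedRun]
    omega

lemma exists_blocksIco_maxBlockedRun (hq : 1 ≤ q) (h2q : 2 * q ≤ p + 1)
    (hsum : p' + q' = p + q) {k : ℕ} (hk : 2 ≤ k) :
    ∃ Z : Finset ℕ, Z.card ≤ k ∧ BlocksIco p' q' Z 0 (maxBlockedRun p q k) := by
  by_cases hpair : q ≤ p' ∧ q ≤ q'
  · obtain ⟨t, rfl⟩ : ∃ t, k = t + 2 := ⟨k - 2, by omega⟩
    exact exists_blocksIco_maxBlockedRun_add_two hq hpair.1 hpair.2 hsum t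
  obtain ⟨ℓ, hℓ, hblock⟩ : ∃ ℓ, p + 1 ≤ ℓ ∧ ∀ s, ∃ z, BlocksIco p' q' {z} s (s + ℓ) := by
    rcases Nat.lt_or_ge q' q with h | h
    · exact ⟨p', by omega, fun _ => ⟨_, blocksIco_singleton_right⟩⟩
    · exact ⟨q', by omega, fun _ => ⟨_, blocksIco_singleton_left⟩⟩
  obtain ⟨Z, hZ, hb⟩ := exists_blocksIco_mul hblock k
  exact ⟨Z, hZ, hb.mono le_rfl ((maxBlockedRun_le_mul h2q k).trans (Nat.mul_le_mul_left k hℓ))⟩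

end Constructions

section CriticalLength

variable {p q k : ℕ}

lemma solves_Qpq_of_forall_not_blocksIco {n : ℕ}
    (h : ∀ Z : Finset ℕ, Z.card ≤ k → ¬ BlocksIco p q Z 0 n) :
    Solves (Qpq p q) (p + q + n) k := by
  intro w hw
  obtain ⟨i, hin, hfree⟩ : ∃ i < n, ∀ z ∈ (Finset.range (p + q + n)).filter (w · = false),
      ¬ Blocks p q z i := by
    simpa [BlocksIco] using h _ hw
  refine ⟨i, fun x hx => ?_⟩
  rw [mem_Qpq] at hx
  have hlt : i + x < p + q + n := by omega
  refine ⟨hlt, ?_⟩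
  by_contra hwx
  exact hfree (i + x) (Finset.mem_filter.2 ⟨Finset.mem_range.2 hlt, by simpa using hwx⟩)
    (by unfold Blocks; omega)

lemma add_lt_of_solves_Qpq (hq : 1 ≤ q) {m n : ℕ} {Z : Finset ℕ}
    (hs : Solves (Qpq p q) m k) (hZ : Z.card ≤ k) (hb : BlocksIco p q Z 0 n) :
    p + q + n < m := by
  set w : ℕ → Bool := fun j => decide (j ∉ Z)
  have hzeros : zerosIn m w ≤ k :=
    (Finset.card_le_card fun j hj => by simpa [w] using (Finset.mem_filter.1 hj).2).trans hZ
  obtain ⟨i, hi⟩ := hs w hzeros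
  have hspan := (hi (p + q) (mem_Qpq.2 (by omega))).1
  by_contra hge
  obtain ⟨z, hz, hzi⟩ := hb i (Nat.zero_le i) (by omega)
  unfold Blocks at hzi
  have hwz := (hi (z - i) (mem_Qpq.2 (by omega))).2
  rw [Nat.add_sub_cancel' hzi.1] at hwz
  simp [w, hz] at hwz

lemma critLen_Qpq_le (hqp : q ≤ p) (hp : p ≤ 2 * q + 1) :
    critLen (Qpq p q) k ≤ p + q + (maxBlockedRun p q k + 1) :=
  Nat.sInf_le <| solves_Qpq_of_forall_not_blocksIco fun Z hZ hb => by
    have := hb.le_add_maxBlockedRun hqp hp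
    have := maxBlockedRun_mono hp hZ
    omega

lemma add_lt_critLen_Qpq (hq : 1 ≤ q) {n : ℕ} {Z : Finset ℕ} (hZ : Z.card ≤ k)
    (hb : BlocksIco p q Z 0 n) : p + q + n < critLen (Qpq p q) k := by
  have hsolves : Solves (Qpq p q) (p + q + (k * (p + q + 1) + 1)) k :=
    solves_Qpq_of_forall_not_blocksIco fun Z' hZ' hb' => by
      have := hb'.le_add_card_mul
      have := Nat.mul_le_mul_right (p + q + 1) hZ'
      omega
  exact add_lt_of_solves_Qpq hq (Nat.sInf_mem (s := {m | Solves (Qpq p q) m k}) ⟨_, hsolves⟩)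
    hZ hb

end CriticalLength

/-- for `k ≥ 2` and `d ≥ 2`, the seed `#^{d-r} - #^r` with `r = [d/3]`
(nearest integer to `d/3`, i.e. `(2d+3)/6` with integer division) has minimal
`k`-critical length among all one-joker seeds `#^{d-r'} - #^{r'}` of weight `d`. -/
theorem stmt6 (d k : ℕ) (hd : 2 ≤ d) (hk : 2 ≤ k) :
    ∀ r' : ℕ, 1 ≤ r' → r' ≤ d - 1 →
      critLen (Qpq (d - (2*d+3)/6) ((2*d+3)/6)) k ≤ critLen (Qpq (d - r') r') k := by
  intro r' hr₁ hr₂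
  obtain ⟨Z, hZ, hb⟩ := exists_blocksIco_maxBlockedRun (p := d - (2*d+3)/6) (q := (2*d+3)/6)
    (p' := d - r') (q' := r') (by omega) (by omega) (by omega) hk
  have hupper := critLen_Qpq_le (p := d - (2*d+3)/6) (q := (2*d+3)/6) (k := k)
    (by omega) (by omega)
  have hlower := add_lt_critLen_Qpq hr₁ hZ hb
  omega
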